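/- For every continuous function f : ℝ → ℂ and every polynomial p with complex coefficients of degree strictly less than k, one has ‖f(A)b − Q f(T) Qᴴ b‖₂ ≤ ( max_{λ ∈ Λ(A)} |f(λ) − p(λ)| + max_{μ ∈ Λ(T)} |f(μ) − p(μ)| ) ‖b‖₂, where Λ(B) denotes the set of eigenvalues of a Hermitian matrix B. Consequently ‖f(A)b − Q f(T) Qᴴ b‖₂ ≤ 2 ( sup_{x ∈ [λ_min(A), λ_max(A)]} |f(x) − p(x)| ) ‖b‖₂. -/

import Mathlib

/-!
Lanczos reproduces polynomials of degree `< k` exactly: from `A Q = Q T + β q e_kᵀ` one gets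
`Aʲ Q e₁ = Q Tʲ e₁` for `j < k`, because the tridiagonal `Tʲ` has `(Tʲ)ₖ₁ = 0` for
`j < k - 1`; since `b = ‖b‖ Q e₁`, this gives `p(A) b = Q p(T) Qᴴ b`. Hence the error for `f`
equals the error for `f - p`, and each of the two terms is bounded through the spectral
decompositions by the largest value of `|f - p|` on the respective spectrum (`Q` being an
isometry). Finally `T = Qᴴ A Q` is a compression of `A`, so by the Rayleigh quotient its
eigenvalues lie in `[λ_min(A), λ_max(A)]`.
-/

open Matrix MeasureTheory

/-- The Euclidean 2-norm of a complex vector. -/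
noncomputable def norm2 {n : ℕ} (v : Fin n → ℂ) : ℝ :=
  Real.sqrt (∑ i, ‖v i‖ ^ 2)

/-- Apply a scalar function to a Hermitian matrix through its spectral decomposition. -/
noncomputable def matFun {m : ℕ} {B : Matrix (Fin m) (Fin m) ℂ}
    (hB : B.IsHermitian) (f : ℝ → ℂ) : Matrix (Fin m) (Fin m) ℂ :=
  (hB.eigenvectorUnitary : Matrix (Fin m) (Fin m) ℂ) *
    Matrix.diagonal (fun i => f (hB.eigenvalues i)) *
    star (hB.eigenvectorUnitary : Matrix (Fin m) (Fin m) ℂ)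

open Polynomial Unitary

section Norm2

variable {n m : ℕ}

lemma norm2_eq_norm (v : Fin n → ℂ) : norm2 v = ‖WithLp.toLp 2 v‖ := by
  rw [EuclideanSpace.norm_eq]; rfl

lemma norm2_nonneg (v : Fin n → ℂ) : 0 ≤ norm2 v := Real.sqrt_nonneg _

lemma norm2_eq_zero {v : Fin n → ℂ} : norm2 v = 0 ↔ v = 0 := by
  rw [norm2_eq_norm, norm_eq_zero, WithLp.toLp_eq_zero]

lemma norm2_sub_le (u v : Fin n → ℂ) : norm2 (u - v) ≤ norm2 u + norm2 v := by
  simpa only [norm2_eq_norm, WithLp.toLp_sub] using norm_sub_le (WithLp.toLp 2 u) (WithLp.toLp 2 v)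

lemma norm2_eq_sqrt_re_dotProduct (v : Fin n → ℂ) : norm2 v = √(star v ⬝ᵥ v).re := by
  simp only [norm2, dotProduct, Pi.star_apply, Complex.re_sum, Complex.star_def,
    Complex.conj_mul', ← Complex.ofReal_pow, Complex.ofReal_re]

lemma norm2_mulVec_of_conjTranspose_mul_self {M : Matrix (Fin n) (Fin m) ℂ} (hM : Mᴴ * M = 1)
    (v : Fin m → ℂ) : norm2 (M *ᵥ v) = norm2 v := by
  rw [norm2_eq_sqrt_re_dotProduct, norm2_eq_sqrt_re_dotProduct, star_mulVec, dotProduct_mulVec,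
    vecMul_vecMul, hM, vecMul_one]

lemma norm2_unitary_mulVec (U : unitaryGroup (Fin n) ℂ) (v : Fin n → ℂ) :
    norm2 ((U : Matrix (Fin n) (Fin n) ℂ) *ᵥ v) = norm2 v :=
  norm2_mulVec_of_conjTranspose_mul_self (UnitaryGroup.star_mul_self U) v

lemma norm2_diagonal_mulVec_le (d v : Fin n → ℂ) :
    norm2 (diagonal d *ᵥ v) ≤ (⨆ i, ‖d i‖) * norm2 v := by
  have hd : ∀ i, ‖d i‖ ≤ ⨆ i, ‖d i‖ := le_ciSup (Set.finite_range _).bddAbove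
  have hsq : ∑ i, ‖(diagonal d *ᵥ v) i‖ ^ 2 ≤ (⨆ i, ‖d i‖) ^ 2 * ∑ i, ‖v i‖ ^ 2 := by
    rw [Finset.mul_sum]
    refine Finset.sum_le_sum fun i _ => ?_
    rw [mulVec_diagonal, norm_mul, mul_pow]
    gcongr
    exact hd i
  calc norm2 (diagonal d *ᵥ v) ≤ √((⨆ i, ‖d i‖) ^ 2 * ∑ i, ‖v i‖ ^ 2) :=
        Real.sqrt_le_sqrt hsq
    _ = (⨆ i, ‖d i‖) * norm2 v := by
      rw [Real.sqrt_mul (sq_nonneg _), Real.sqrt_sq (Real.iSup_nonneg fun i => norm_nonneg _)]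
      rfl

end Norm2


section MatFun

variable {m : ℕ} {B : Matrix (Fin m) (Fin m) ℂ} (hB : B.IsHermitian)

lemma matFun_eq_conjStarAlgAut (f : ℝ → ℂ) :
    matFun hB f = conjStarAlgAut ℂ _ hB.eigenvectorUnitary (diagonal (f ∘ hB.eigenvalues)) :=
  rfl

lemma matFun_sub (f g : ℝ → ℂ) : matFun hB (f - g) = matFun hB f - matFun hB g := by
  rw [matFun_eq_conjStarAlgAut, matFun_eq_conjStarAlgAut, matFun_eq_conjStarAlgAut, ← map_sub,
    diagonal_sub]
  rfl

lemma matFun_eval (p : ℂ[X]) : matFun hB (fun x => p.eval (x : ℂ)) = aeval B p := by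
  conv_rhs => rw [hB.spectral_theorem]
  rw [aeval_algHom_apply, ← diagonalAlgHom_apply ℂ, aeval_algHom_apply, aeval_pi_apply]
  rfl

lemma norm2_matFun_mulVec_le (f : ℝ → ℂ) (v : Fin m → ℂ) :
    norm2 (matFun hB f *ᵥ v) ≤ (⨆ i, ‖f (hB.eigenvalues i)‖) * norm2 v := by
  rw [matFun_eq_conjStarAlgAut, conjStarAlgAut_apply, ← mulVec_mulVec, ← mulVec_mulVec,
    norm2_unitary_mulVec, ← coe_star]
  refine (norm2_diagonal_mulVec_le _ _).trans_eq ?_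
  rw [norm2_unitary_mulVec]
  rfl

lemma exists_re_star_dotProduct_mulVec_eq_sum (v : Fin m → ℂ) :
    ∃ u : Fin m → ℂ, norm2 u = norm2 v ∧
      (star v ⬝ᵥ (B *ᵥ v)).re = ∑ i, hB.eigenvalues i * ‖u i‖ ^ 2 := by
  set U : Matrix (Fin m) (Fin m) ℂ := (hB.eigenvectorUnitary : Matrix (Fin m) (Fin m) ℂ)
  refine ⟨star U *ᵥ v, by rw [← coe_star, norm2_unitary_mulVec], ?_⟩
  have hv : star v ᵥ* U = star (star U *ᵥ v) := by
    rw [star_mulVec, ← star_eq_conjTranspose, star_star]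
  conv_lhs => rw [hB.spectral_theorem, conjStarAlgAut_apply, ← mulVec_mulVec, ← mulVec_mulVec,
    dotProduct_mulVec, hv, dotProduct_mulVec]
  simp only [vecMul_diagonal, dotProduct, Pi.star_apply, Function.comp_apply, Complex.re_sum]
  refine Finset.sum_congr rfl fun i _ => ?_
  rw [mul_right_comm, Complex.star_def, Complex.conj_mul', ← Complex.ofReal_pow,
    Complex.re_ofReal_mul, mul_comm]
  rfl

end MatFun

lemma sum_mul_mem_Icc_iInf_iSup {ι : Type*} [Fintype ι] (x w : ι → ℝ) (hw : ∀ i, 0 ≤ w i)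
    (hw1 : ∑ i, w i = 1) : ∑ i, x i * w i ∈ Set.Icc (⨅ i, x i) (⨆ i, x i) := by
  have hlo : ∀ i, ⨅ j, x j ≤ x i := ciInf_le (Set.finite_range x).bddBelow
  have hhi : ∀ i, x i ≤ ⨆ j, x j := le_ciSup (Set.finite_range x).bddAbove
  constructor
  · calc ⨅ j, x j = ∑ i, (⨅ j, x j) * w i := by rw [← Finset.mul_sum, hw1, mul_one]
      _ ≤ ∑ i, x i * w i := by gcongr with i; exacts [hw i, hlo i]
  · calc ∑ i, x i * w i ≤ ∑ i, (⨆ j, x j) * w i := by gcongr with i; exacts [hw i, hhi i]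
      _ = ⨆ j, x j := by rw [← Finset.mul_sum, hw1, mul_one]

section Rayleigh

variable {n : ℕ} {A : Matrix (Fin n) (Fin n) ℂ} (hA : A.IsHermitian)

lemma re_star_dotProduct_mulVec_mem_Icc {v : Fin n → ℂ} (hv : norm2 v = 1) :
    (star v ⬝ᵥ (A *ᵥ v)).re ∈ Set.Icc (⨅ i, hA.eigenvalues i) (⨆ i, hA.eigenvalues i) := by
  obtain ⟨u, hu, hre⟩ := exists_re_star_dotProduct_mulVec_eq_sum hA v
  rw [hre]
  refine sum_mul_mem_Icc_iInf_iSup _ _ (fun i => sq_nonneg _) ?_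
  rw [← Real.sq_sqrt (Finset.sum_nonneg fun i _ => sq_nonneg _)]
  change norm2 u ^ 2 = 1
  rw [hu, hv, one_pow]

lemma eigenvalues_mem_Icc_of_conjTranspose_mul_mul_eq {k : ℕ} {Q : Matrix (Fin n) (Fin k) ℂ}
    (hQ : Qᴴ * Q = 1) {T : Matrix (Fin k) (Fin k) ℂ} (hT : T.IsHermitian) (hQAQ : Qᴴ * A * Q = T)
    (i : Fin k) :
    hT.eigenvalues i ∈ Set.Icc (⨅ j, hA.eigenvalues j) (⨆ j, hA.eigenvalues j) := by
  set w : Fin k → ℂ := (hT.eigenvectorBasis i).ofLp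
  have hw : norm2 w = 1 := by
    rw [norm2_eq_norm]
    exact hT.eigenvectorBasis.orthonormal.1 i
  have hQw : star w ⬝ᵥ (T *ᵥ w) = star (Q *ᵥ w) ⬝ᵥ (A *ᵥ (Q *ᵥ w)) := by
    rw [← hQAQ, ← mulVec_mulVec, ← mulVec_mulVec, dotProduct_mulVec, star_mulVec]
  rw [hT.eigenvalues_eq i]
  change (star w ⬝ᵥ (T *ᵥ w)).re ∈ _
  rw [hQw]
  exact re_star_dotProduct_mulVec_mem_Icc hA (by rwa [norm2_mulVec_of_conjTranspose_mul_self hQ])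

end Rayleigh

section Krylov

variable {R ι κ : Type*} [CommRing R] [Fintype ι] [DecidableEq ι] [Fintype κ] [DecidableEq κ]
  {A : Matrix ι ι R} {Q : Matrix ι κ R} {T : Matrix κ κ R} {E : Matrix ι κ R}

lemma pow_mulVec_mulVec_of_mul_eq_add (hAQ : A * Q = Q * T + E) {x : κ → R} {j : ℕ}
    (hE : ∀ i < j, E *ᵥ (T ^ i *ᵥ x) = 0) : A ^ j *ᵥ (Q *ᵥ x) = Q *ᵥ (T ^ j *ᵥ x) := by
  induction j with
  | zero => simp
  | succ j ih =>
    rw [pow_succ', ← mulVec_mulVec, ih fun i hi => hE i (by omega), mulVec_mulVec, hAQ,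
      add_mulVec, hE j j.lt_succ_self, add_zero, ← mulVec_mulVec, mulVec_mulVec _ T, ← pow_succ']

lemma aeval_mulVec_mulVec_of_mul_eq_add (hAQ : A * Q = Q * T + E) {x : κ → R} {p : R[X]}
    (hE : ∀ i < p.natDegree, E *ᵥ (T ^ i *ᵥ x) = 0) :
    aeval A p *ᵥ (Q *ᵥ x) = Q *ᵥ (aeval T p *ᵥ x) := by
  simp only [aeval_eq_sum_range, sum_mulVec, mulVec_sum, smul_mulVec, mulVec_smul]
  refine Finset.sum_congr rfl fun j hj => ?_
  rw [pow_mulVec_mulVec_of_mul_eq_add hAQ fun i hi =>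
    hE i (hi.trans_le (Nat.lt_succ_iff.1 (Finset.mem_range.1 hj)))]

end Krylov

lemma pow_apply_eq_zero_of_add_lt {R : Type*} [Semiring R] {k : ℕ}
    {T : Matrix (Fin k) (Fin k) R} (hT : ∀ i j : Fin k, (j : ℕ) + 1 < i → T i j = 0) (j : ℕ)
    {a b : Fin k} (hab : (b : ℕ) + j < a) :
    (T ^ j) a b = 0 := by
  induction j generalizing a with
  | zero => exact one_apply_ne (by omega)
  | succ j ih =>
    rw [pow_succ', mul_apply]
    refine Finset.sum_eq_zero fun c _ => ?_
    by_cases hc : (c : ℕ) + 1 < a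
    · rw [hT a c hc, zero_mul]
    · rw [ih (by omega), mul_zero]

lemma aeval_mulVec_mulVec_single_of_mul_eq_add {R : Type*} [CommRing R] {n k : ℕ} (hk : 0 < k)
    {A : Matrix (Fin n) (Fin n) R} {Q : Matrix (Fin n) (Fin k) R} {T : Matrix (Fin k) (Fin k) R}
    (hT : ∀ i j : Fin k, (j : ℕ) + 1 < i → T i j = 0) {β : R} {q : Fin n → R}
    (hAQ : A * Q = Q * T + β • vecMulVec q (Pi.single ⟨k - 1, by omega⟩ 1))
    {p : R[X]} (hp : p.natDegree < k) :
    aeval A p *ᵥ (Q *ᵥ Pi.single ⟨0, hk⟩ 1) = Q *ᵥ (aeval T p *ᵥ Pi.single ⟨0, hk⟩ 1) := by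
  refine aeval_mulVec_mulVec_of_mul_eq_add hAQ fun i hi => ?_
  have hlast : (T ^ i) ⟨k - 1, by omega⟩ ⟨0, hk⟩ = 0 :=
    pow_apply_eq_zero_of_add_lt hT i (by simp only; omega)
  rw [smul_mulVec, vecMulVec_mulVec, single_one_dotProduct, mulVec_single_one]
  simp [hlast]

lemma norm2_matFun_sub_le_of_exact {n k : ℕ} {A : Matrix (Fin n) (Fin n) ℂ} (hA : A.IsHermitian)
    {T : Matrix (Fin k) (Fin k) ℂ} (hT : T.IsHermitian) {Q : Matrix (Fin n) (Fin k) ℂ}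
    (hQ : Qᴴ * Q = 1) {b : Fin n → ℂ} (hb : Q *ᵥ (Qᴴ *ᵥ b) = b) {g : ℝ → ℂ}
    (hg : matFun hA g *ᵥ b = (Q * matFun hT g * Qᴴ) *ᵥ b) (f : ℝ → ℂ) :
    norm2 (matFun hA f *ᵥ b - (Q * matFun hT f * Qᴴ) *ᵥ b) ≤
      ((⨆ i, ‖f (hA.eigenvalues i) - g (hA.eigenvalues i)‖) +
        ⨆ i, ‖f (hT.eigenvalues i) - g (hT.eigenvalues i)‖) * norm2 b := by
  have hQb : norm2 (Qᴴ *ᵥ b) = norm2 b := by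
    conv_rhs => rw [← hb, norm2_mulVec_of_conjTranspose_mul_self hQ]
  have herr : matFun hA f *ᵥ b - (Q * matFun hT f * Qᴴ) *ᵥ b =
      matFun hA (f - g) *ᵥ b - Q *ᵥ (matFun hT (f - g) *ᵥ (Qᴴ *ᵥ b)) := by
    rw [mulVec_mulVec, mulVec_mulVec, matFun_sub, matFun_sub, sub_mulVec,
      Matrix.mul_sub, Matrix.sub_mul, sub_mulVec, hg]
    abel
  calc _ ≤ norm2 (matFun hA (f - g) *ᵥ b) + norm2 (matFun hT (f - g) *ᵥ (Qᴴ *ᵥ b)) := by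
        rw [herr, ← norm2_mulVec_of_conjTranspose_mul_self hQ (matFun hT (f - g) *ᵥ _)]
        exact norm2_sub_le _ _
    _ ≤ (⨆ i, ‖f (hA.eigenvalues i) - g (hA.eigenvalues i)‖) * norm2 b +
          (⨆ i, ‖f (hT.eigenvalues i) - g (hT.eigenvalues i)‖) * norm2 (Qᴴ *ᵥ b) :=
      add_le_add (norm2_matFun_mulVec_le hA _ _) (norm2_matFun_mulVec_le hT _ _)
    _ = _ := by rw [hQb, add_mul]

lemma iSup_norm_le_sSup_image_Icc {E ι : Type*} [NormedAddCommGroup E] {h : ℝ → E} {a b : ℝ}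
    (hh : ContinuousOn h (Set.Icc a b)) {x : ι → ℝ} (hx : ∀ i, x i ∈ Set.Icc a b) :
    ⨆ i, ‖h (x i)‖ ≤ sSup ((fun t => ‖h t‖) '' Set.Icc a b) := by
  have hbdd := (isCompact_Icc.image_of_continuousOn hh.norm).bddAbove
  refine Real.iSup_le (fun i => le_csSup hbdd ⟨x i, hx i, rfl⟩) (Real.sSup_nonneg ?_)
  rintro _ ⟨t, -, rfl⟩
  exact norm_nonneg _

theorem lanczos_fa_polynomial_bounds_general
    {n k : ℕ} (hk : 0 < k)
    (A : Matrix (Fin n) (Fin n) ℂ) (hA : A.IsHermitian)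
    (b : Fin n → ℂ)
    (Q : Matrix (Fin n) (Fin k) ℂ) (hQ : Qᴴ * Q = 1)
    (hQb : Q.mulVec (Pi.single (⟨0, hk⟩ : Fin k) 1) = (norm2 b)⁻¹ • b)
    (T : Matrix (Fin k) (Fin k) ℝ)
    (hTtri : ∀ i j : Fin k, (i : ℕ) + 1 < (j : ℕ) ∨ (j : ℕ) + 1 < (i : ℕ) → T i j = 0)
    (βk : ℝ)
    (q : Fin n → ℂ) (hQq : Qᴴ.mulVec q = 0)
    (hAQ : A * Q = Q * T.map Complex.ofReal + (βk : ℂ) •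
      Matrix.vecMulVec q (Pi.single (⟨k - 1, Nat.sub_lt hk Nat.one_pos⟩ : Fin k) 1))
    (hTH : (T.map Complex.ofReal).IsHermitian)
    (f : ℝ → ℂ) (hf : Continuous f)
    (p : Polynomial ℂ) (hp : p.degree < k) :
    norm2 ((matFun hA f).mulVec b - (Q * matFun hTH f * Qᴴ).mulVec b) ≤
        ((⨆ i : Fin n, ‖f (hA.eigenvalues i) - p.eval ((hA.eigenvalues i : ℝ) : ℂ)‖) +
          (⨆ i : Fin k, ‖f (hTH.eigenvalues i) - p.eval ((hTH.eigenvalues i : ℝ) : ℂ)‖)) *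
          norm2 b ∧
      norm2 ((matFun hA f).mulVec b - (Q * matFun hTH f * Qᴴ).mulVec b) ≤
        2 * sSup ((fun x : ℝ => ‖f x - p.eval ((x : ℝ) : ℂ)‖) ''
            Set.Icc (⨅ i : Fin n, hA.eigenvalues i) (⨆ i : Fin n, hA.eigenvalues i)) *
          norm2 b := by
  have hb : b = norm2 b • Q *ᵥ Pi.single ⟨0, hk⟩ 1 := by
    -- if `norm2 b = 0`, `hQb` only says `Q e₁ = 0⁻¹ • b = 0`
    rcases eq_or_ne (norm2 b) 0 with h | h
    · rw [h, zero_smul]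
      exact norm2_eq_zero.1 h
    · rw [hQb, smul_inv_smul₀ h]
  have hQtb : Qᴴ *ᵥ b = norm2 b • Pi.single ⟨0, hk⟩ 1 := by
    conv_lhs => rw [hb]
    rw [mulVec_smul, mulVec_mulVec, hQ, one_mulVec]
  have hrange : Q *ᵥ (Qᴴ *ᵥ b) = b := by rw [hQtb, mulVec_smul, ← hb]
  have hdeg : p.natDegree < k := by
    rcases eq_or_ne p 0 with rfl | hp0
    · exact hk
    · exact (natDegree_lt_iff_degree_lt hp0).2 hp
  have hexact : matFun hA (fun x => p.eval (x : ℂ)) *ᵥ b =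
      (Q * matFun hTH (fun x => p.eval (x : ℂ)) * Qᴴ) *ᵥ b := by
    rw [matFun_eval, matFun_eval, ← mulVec_mulVec, ← mulVec_mulVec, hQtb]
    conv_lhs => rw [hb]
    rw [mulVec_smul, mulVec_smul, mulVec_smul, aeval_mulVec_mulVec_single_of_mul_eq_add hk
      (fun i j h => by simp [hTtri i j (Or.inr h)]) hAQ hdeg]
  have hbound := norm2_matFun_sub_le_of_exact hA hTH hQ hrange hexact f
  refine ⟨hbound, hbound.trans ?_⟩
  have hQAQ : Qᴴ * A * Q = T.map Complex.ofReal := by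
    rw [Matrix.mul_assoc, hAQ, Matrix.mul_add, ← Matrix.mul_assoc, hQ, Matrix.one_mul,
      Matrix.mul_smul, mul_vecMulVec, hQq, zero_vecMulVec, smul_zero, add_zero]
  have hcont : Continuous fun x : ℝ => f x - p.eval (x : ℂ) :=
    hf.sub (p.continuous.comp Complex.continuous_ofReal)
  rw [two_mul]
  refine mul_le_mul_of_nonneg_right (add_le_add ?_ ?_) (norm2_nonneg b)
  · exact iSup_norm_le_sSup_image_Icc hcont.continuousOn fun i =>
      ⟨ciInf_le (Set.finite_range _).bddBelow i, le_ciSup (Set.finite_range _).bddAbove i⟩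
  · exact iSup_norm_le_sSup_image_Icc hcont.continuousOn
      (eigenvalues_mem_Icc_of_conjTranspose_mul_mul_eq hA hQ hTH hQAQ)

theorem lanczos_fa_polynomial_bounds
    {n k : ℕ} (hn : 0 < n) (hk : 0 < k)
    (A : Matrix (Fin n) (Fin n) ℂ) (hA : A.IsHermitian)
    (b : Fin n → ℂ) (hb : b ≠ 0)
    (Q : Matrix (Fin n) (Fin k) ℂ) (hQ : Qᴴ * Q = 1)
    (hQb : Q.mulVec (Pi.single (⟨0, hk⟩ : Fin k) 1) = (norm2 b)⁻¹ • b)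
    (T : Matrix (Fin k) (Fin k) ℝ) (hTsymm : T.IsSymm)
    (hTtri : ∀ i j : Fin k, (i : ℕ) + 1 < (j : ℕ) ∨ (j : ℕ) + 1 < (i : ℕ) → T i j = 0)
    (hToff : ∀ i j : Fin k, (i : ℕ) + 1 = (j : ℕ) → 0 < T i j)
    (βk : ℝ) (hβk : 0 < βk)
    (q : Fin n → ℂ) (hq : norm2 q = 1) (hQq : Qᴴ.mulVec q = 0)
    (hAQ : A * Q = Q * T.map Complex.ofReal + (βk : ℂ) •
      Matrix.vecMulVec q (Pi.single (⟨k - 1, Nat.sub_lt hk Nat.one_pos⟩ : Fin k) 1))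
    (hTH : (T.map Complex.ofReal).IsHermitian)
    (f : ℝ → ℂ) (hf : Continuous f)
    (p : Polynomial ℂ) (hp : p.degree < k) :
    norm2 ((matFun hA f).mulVec b - (Q * matFun hTH f * Qᴴ).mulVec b) ≤
        ((⨆ i : Fin n, ‖f (hA.eigenvalues i) - p.eval ((hA.eigenvalues i : ℝ) : ℂ)‖) +
          (⨆ i : Fin k, ‖f (hTH.eigenvalues i) - p.eval ((hTH.eigenvalues i : ℝ) : ℂ)‖)) *
          norm2 b ∧
      norm2 ((matFun hA f).mulVec b - (Q * matFun hTH f * Qᴴ).mulVec b) ≤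
        2 * sSup ((fun x : ℝ => ‖f x - p.eval ((x : ℝ) : ℂ)‖) ''
            Set.Icc (⨅ i : Fin n, hA.eigenvalues i) (⨆ i : Fin n, hA.eigenvalues i)) *
          norm2 b :=
  lanczos_fa_polynomial_bounds_general hk A hA b Q hQ hQb T hTtri βk q hQq hAQ hTH f hf p hp
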